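/- Discrete anti-self-duality of ē ∪ e: with e = Σ_k (e₁^k + e₂^k 𝐢 + e₃^k 𝐣 + e₄^k 𝐤), the 2-form ē ∪ e equals 2[(ε₁₂-ε₃₄)𝐢 + (ε₁₃+ε₂₄)𝐣 + (ε₁₄-ε₂₃)𝐤], and it is anti-self-dual: ∗ι̃(ē ∪ e) = -(ē ∪ e). -/

import Mathlib

/-- The quaternionic units `1, 𝐢, 𝐣, 𝐤` appearing as the coefficients of the
1-form `e = e₁ + e₂𝐢 + e₃𝐣 + e₄𝐤`. -/
noncomputable def qu : Fin 4 → Quaternion ℝ :=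
  ![1, ⟨0, 1, 0, 0⟩, ⟨0, 0, 1, 0⟩, ⟨0, 0, 0, 1⟩]

/-- The quaternionic component of the 2-form `ē ∪ e` on `ε_{ij}` (`i < j`):
since `e_i ∪ e_j = ε_{ij}` and `e_j ∪ e_i = -ε_{ij}`, it is
`conj(u_i)·u_j - conj(u_j)·u_i`. -/
noncomputable def ebarCupE (i j : Fin 4) : Quaternion ℝ :=
  star (qu i) * qu j - star (qu j) * qu i

/-! With `u₀ = 1, u₁ = 𝐢, u₂ = 𝐣, u₃ = 𝐤`, the component `ū_i u_j - ū_j u_i` equals `2 u_j` for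
`i = 0` and `-2 u_i u_j` for `1 ≤ i < j`, so the relations `𝐣𝐤 = 𝐢`, `𝐢𝐤 = -𝐣`, `𝐢𝐣 = 𝐤` make
each component the negative of its partner under `∗ι̃`. -/

theorem re_qu (k : Fin 4) : (qu k).re = if k = 0 then 1 else 0 := by
  fin_cases k <;> rfl

theorem imI_qu (k : Fin 4) : (qu k).imI = if k = 1 then 1 else 0 := by
  fin_cases k <;> rfl

theorem imJ_qu (k : Fin 4) : (qu k).imJ = if k = 2 then 1 else 0 := by
  fin_cases k <;> rfl

theorem imK_qu (k : Fin 4) : (qu k).imK = if k = 3 then 1 else 0 := by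
  fin_cases k <;> rfl

-- `⟨a, b, c, d⟩ : Quaternion ℝ` elaborates at the unfolded type `ℍ[ℝ,-1,0,-1]`, out of reach of
-- `rw` and `simp`; this identity is applied with `exact` instead.
theorem neg_quaternion_mk (a b c d : ℝ) :
    -(⟨a, b, c, d⟩ : Quaternion ℝ) = ⟨-a, -b, -c, -d⟩ :=
  rfl

theorem ebarCupE_components :
    ebarCupE 0 1 = ⟨0, 2, 0, 0⟩ ∧ ebarCupE 2 3 = ⟨0, -2, 0, 0⟩ ∧
      ebarCupE 0 2 = ⟨0, 0, 2, 0⟩ ∧ ebarCupE 1 3 = ⟨0, 0, 2, 0⟩ ∧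
      ebarCupE 0 3 = ⟨0, 0, 0, 2⟩ ∧ ebarCupE 1 2 = ⟨0, 0, 0, -2⟩ := by
  refine ⟨?_, ?_, ?_, ?_, ?_, ?_⟩ <;> apply Quaternion.ext <;>
    simp [ebarCupE, re_qu, imI_qu, imJ_qu, imK_qu] <;> norm_num

/-- Discrete anti-self-duality of `ē ∪ e`: the 2-form `ē ∪ e` equals
`2[(ε₁₂-ε₃₄)𝐢 + (ε₁₃+ε₂₄)𝐣 + (ε₁₄-ε₂₃)𝐤]`, i.e. its components are
`F^{12} = 2𝐢`, `F^{34} = -2𝐢`, `F^{13} = F^{24} = 2𝐣`, `F^{14} = 2𝐤`,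
`F^{23} = -2𝐤`, and these satisfy the anti-self-duality relations
`∗ι̃(ē ∪ e) = -(ē ∪ e)`, i.e. `F^{12} = -F^{34}`, `F^{13} = F^{24}`,
`F^{14} = -F^{23}`. -/
theorem ebarCupE_antiSelfDual :
    (ebarCupE 0 1 = ⟨0, 2, 0, 0⟩ ∧ ebarCupE 2 3 = ⟨0, -2, 0, 0⟩ ∧
     ebarCupE 0 2 = ⟨0, 0, 2, 0⟩ ∧ ebarCupE 1 3 = ⟨0, 0, 2, 0⟩ ∧
     ebarCupE 0 3 = ⟨0, 0, 0, 2⟩ ∧ ebarCupE 1 2 = ⟨0, 0, 0, -2⟩) ∧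
    (ebarCupE 0 1 = - ebarCupE 2 3 ∧ ebarCupE 0 2 = ebarCupE 1 3 ∧
     ebarCupE 0 3 = - ebarCupE 1 2) := by
  obtain ⟨h01, h23, h02, h13, h03, h12⟩ := ebarCupE_components
  refine ⟨⟨h01, h23, h02, h13, h03, h12⟩, ?_, h02.trans h13.symm, ?_⟩
  · rw [h01, h23]; exact ((neg_quaternion_mk _ _ _ _).trans (by norm_num)).symm
  · rw [h03, h12]; exact ((neg_quaternion_mk _ _ _ _).trans (by norm_num)).symm
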